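/- For every pure chromatic simplicial complex C of dimension n over the agent set A, the chromatic simplicial complex G(F(C)) is isomorphic to C as a pure chromatic simplicial complex. -/

import Mathlib

/-! ### Chromatic simplicial complexes and Kripke frames -/

/-- A chromatic simplicial complex over the set of agents `A`, on the vertex type `V`. -/
structure CSC (A V : Type) where
  simplexes : Set (Set V)
  nonempty_mem : ∀ X ∈ simplexes, X.Nonempty
  finite_mem : ∀ X ∈ simplexes, X.Finite
  down_closed : ∀ X ∈ simplexes, ∀ Y : Set V, Y ⊆ X → Y.Nonempty → Y ∈ simplexes
  color : V → A
  chromatic : ∀ X ∈ simplexes, Set.InjOn color X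

namespace CSC

variable {A V W : Type}

/-- A vertex of the complex. -/
def IsVertex (C : CSC A V) (v : V) : Prop := {v} ∈ C.simplexes

/-- A facet: a maximal simplex. -/
def IsFacet (C : CSC A V) (X : Set V) : Prop :=
  X ∈ C.simplexes ∧ ∀ Y ∈ C.simplexes, X ⊆ Y → X = Y

/-- A pure chromatic simplicial complex of dimension `n`: all facets have `n+1` vertices. -/
def Pure (C : CSC A V) (n : ℕ) : Prop :=
  ∀ X, C.IsFacet X → X.ncard = n + 1

/-- A chromatic simplicial map: sends simplexes to simplexes and preserves colors. -/
def IsChromMap (C : CSC A V) (D : CSC A W) (f : V → W) : Prop :=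
  (∀ X ∈ C.simplexes, f '' X ∈ D.simplexes) ∧
  (∀ v, C.IsVertex v → D.color (f v) = C.color v)

/-- The type of facets of a complex. -/
def Facets (C : CSC A V) : Type := {X : Set V // C.IsFacet X}

/-- The vertices of a complex, as a type. -/
abbrev Vertices (C : CSC A V) : Type := {v : V // C.IsVertex v}

end CSC

/-- A Kripke frame over the set of agents `A` with states `S`:
a family of equivalence (indistinguishability) relations indexed by agents. -/
structure KFrame (A S : Type) where
  rel : A → S → S → Prop
  isEquiv : ∀ a, Equivalence (rel a)

namespace KFrame

/-- A Kripke frame is proper if any two distinct states are distinguished by some agent. -/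
def Proper {A S : Type} (M : KFrame A S) : Prop := ∀ s t : S, (∀ a, M.rel a s t) → s = t

/-- A morphism of Kripke frames. -/
def IsMorphism {A S T : Type} (M : KFrame A S) (N : KFrame A T) (f : S → T) : Prop :=
  ∀ a u v, M.rel a u v → N.rel a (f u) (f v)

end KFrame

/-! ### Basic facts about pure chromatic complexes over `n+1` agents -/

namespace CSC

variable {n : ℕ} {V : Type}

lemma ncard_le_of_mem (C : CSC (Fin (n+1)) V) {X : Set V} (hX : X ∈ C.simplexes) :
    X.ncard ≤ n + 1 := by
  have h1 : (C.color '' X).ncard = X.ncard := Set.ncard_image_of_injOn (C.chromatic X hX)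
  calc X.ncard = (C.color '' X).ncard := h1.symm
    _ ≤ (Set.univ : Set (Fin (n+1))).ncard :=
        Set.ncard_le_ncard (Set.subset_univ _) Set.finite_univ
    _ = n + 1 := by rw [Set.ncard_univ]; simp

/-- Every simplex of a chromatic complex over `n+1` agents is contained in a facet. -/
lemma exists_facet_above (C : CSC (Fin (n+1)) V) :
    ∀ (k : ℕ) (X : Set V), X ∈ C.simplexes → n + 1 ≤ X.ncard + k →
      ∃ Y, C.IsFacet Y ∧ X ⊆ Y := by
  intro k
  induction k with
  | zero =>
    intro X hX hle
    refine ⟨X, ⟨hX, ?_⟩, subset_rfl⟩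
    intro Y hY hXY
    exact (Set.eq_of_subset_of_ncard_le hXY
      (le_trans (C.ncard_le_of_mem hY) (by omega)) (C.finite_mem Y hY))
  | succ k ih =>
    intro X hX hle
    by_cases hf : C.IsFacet X
    · exact ⟨X, hf, subset_rfl⟩
    · simp only [IsFacet, hX, true_and] at hf
      push_neg at hf
      obtain ⟨Y, hY, hXY, hne⟩ := hf
      have hlt : X.ncard < Y.ncard :=
        Set.ncard_lt_ncard (ssubset_of_subset_of_ne hXY hne) (C.finite_mem Y hY)
      obtain ⟨Z, hZ, hYZ⟩ := ih Y hY (by omega)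
      exact ⟨Z, hZ, hXY.trans hYZ⟩

lemma mem_facet (C : CSC (Fin (n+1)) V) {X : Set V} (hX : X ∈ C.simplexes) :
    ∃ Y, C.IsFacet Y ∧ X ⊆ Y :=
  C.exists_facet_above (n+1) X hX (by omega)

/-- In a pure complex of dimension `n` over `n+1` agents, every facet contains a vertex
of each color. -/
lemma facet_exists_color (C : CSC (Fin (n+1)) V) (hp : C.Pure n)
    {X : Set V} (hX : C.IsFacet X) (a : Fin (n+1)) : ∃ v ∈ X, C.color v = a := by
  have himg : (C.color '' X).ncard = n + 1 := by
    rw [Set.ncard_image_of_injOn (C.chromatic X hX.1)]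
    exact hp X hX
  have huniv : C.color '' X = Set.univ := by
    apply Set.eq_of_subset_of_ncard_le (Set.subset_univ _) ?_ Set.finite_univ
    rw [himg, Set.ncard_univ]; simp
  have ha : a ∈ C.color '' X := by rw [huniv]; trivial
  obtain ⟨v, hv, hc⟩ := ha
  exact ⟨v, hv, hc⟩

end CSC

/-! ### The functor F : from pure chromatic simplicial complexes to Kripke frames. -/

/-- The Kripke frame associated with a pure chromatic simplicial complex: states are the
facets, and two facets are indistinguishable by agent `a` iff they share an `a`-colored
vertex. -/
def kframeOf {n : ℕ} {V : Type} (C : CSC (Fin (n+1)) V) (hp : C.Pure n) :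
    KFrame (Fin (n+1)) C.Facets where
  rel a X Y := ∃ v, v ∈ X.1 ∩ Y.1 ∧ C.color v = a
  isEquiv a := by
    constructor
    · intro X
      obtain ⟨v, hv, hc⟩ := C.facet_exists_color hp X.2 a
      exact ⟨v, ⟨hv, hv⟩, hc⟩
    · rintro X Y ⟨v, ⟨h1, h2⟩, hc⟩
      exact ⟨v, ⟨h2, h1⟩, hc⟩
    · rintro X Y Z ⟨v, ⟨hvX, hvY⟩, hcv⟩ ⟨w, ⟨hwY, hwZ⟩, hcw⟩
      have hvw : v = w := C.chromatic Y.1 Y.2.1 hvY hwY (by rw [hcv, hcw])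
      exact ⟨v, ⟨hvX, by rw [hvw]; exact hwZ⟩, hcv⟩

lemma kframeOf_proper {n : ℕ} {V : Type} (C : CSC (Fin (n+1)) V) (hp : C.Pure n) :
    (kframeOf C hp).Proper := by
  have key : ∀ Z W : C.Facets, (∀ a, ∃ v, v ∈ Z.1 ∩ W.1 ∧ C.color v = a) → W.1 ⊆ Z.1 := by
    intro Z W hzw w hw
    obtain ⟨v, ⟨hvZ, hvW⟩, hcv⟩ := hzw (C.color w)
    have : v = w := C.chromatic W.1 W.2.1 hvW hw hcv
    exact this ▸ hvZ
  intro X Y h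
  apply Subtype.ext
  apply Set.Subset.antisymm
  · apply key Y X
    intro a
    obtain ⟨v, hv, hc⟩ := h a
    exact ⟨v, ⟨hv.2, hv.1⟩, hc⟩
  · exact key X Y h

/-! ### The functor G : from Kripke frames to pure chromatic simplicial complexes. -/

/-- The identification of formal vertices `(s, i)`: `(s,i) ≈ (t,j)` iff `i = j` and
`s ∼_{a_i} t`. -/
def gSetoid {n : ℕ} {S : Type} (M : KFrame (Fin (n+1)) S) : Setoid (S × Fin (n+1)) where
  r p q := p.2 = q.2 ∧ M.rel p.2 p.1 q.1
  iseqv := by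
    constructor
    · exact fun p => ⟨rfl, (M.isEquiv p.2).refl p.1⟩
    · rintro ⟨s, i⟩ ⟨t, j⟩ ⟨h1, h2⟩
      dsimp at h1 h2 ⊢
      subst h1
      exact ⟨rfl, (M.isEquiv i).symm h2⟩
    · rintro ⟨s, i⟩ ⟨t, j⟩ ⟨u, k⟩ ⟨h1, h2⟩ ⟨h3, h4⟩
      dsimp at h1 h2 h3 h4 ⊢
      subst h1; subst h3
      exact ⟨rfl, (M.isEquiv i).trans h2 h4⟩

/-- The vertices of the simplicial complex associated with a Kripke frame:
equivalence classes of formal vertices. -/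
def GVert {n : ℕ} {S : Type} (M : KFrame (Fin (n+1)) S) : Type :=
  Quotient (gSetoid M)

/-- The `n`-simplex glued in for the state `s`. -/
def gFacet {n : ℕ} {S : Type} (M : KFrame (Fin (n+1)) S) (s : S) : Set (GVert M) :=
  Set.range fun i => Quotient.mk (gSetoid M) (s, i)

/-- The chromatic simplicial complex associated with a Kripke frame. -/
def cscOf {n : ℕ} {S : Type} (M : KFrame (Fin (n+1)) S) : CSC (Fin (n+1)) (GVert M) where
  simplexes := {X | X.Nonempty ∧ ∃ s, X ⊆ gFacet M s}
  nonempty_mem _ hX := hX.1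
  finite_mem X hX := by
    obtain ⟨-, s, hs⟩ := hX
    exact (Set.finite_range _).subset hs
  down_closed X hX Y hYX hY := by
    obtain ⟨-, s, hs⟩ := hX
    exact ⟨hY, s, hYX.trans hs⟩
  color := Quotient.lift Prod.snd fun _ _ h => h.1
  chromatic := by
    rintro X ⟨-, s, hs⟩ u hu v hv hcol
    obtain ⟨i, hi⟩ := hs hu
    obtain ⟨j, hj⟩ := hs hv
    rw [← hi, ← hj] at hcol ⊢
    have : i = j := hcol
    rw [this]

lemma gFacet_mem_simplexes {n : ℕ} {S : Type} (M : KFrame (Fin (n+1)) S) (s : S) :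
    gFacet M s ∈ (cscOf M).simplexes :=
  ⟨⟨Quotient.mk (gSetoid M) (s, 0), ⟨0, rfl⟩⟩, s, subset_rfl⟩

lemma gFacet_subset_iff {n : ℕ} {S : Type} (M : KFrame (Fin (n+1)) S) {s t : S} :
    gFacet M s ⊆ gFacet M t ↔ ∀ i, M.rel i s t := by
  constructor
  · intro h i
    obtain ⟨j, hj⟩ := h ⟨i, rfl⟩
    have := Quotient.exact hj
    obtain ⟨h1, h2⟩ := this
    dsimp at h1 h2
    rw [← h1]
    exact (M.isEquiv j).symm h2
  · rintro h v ⟨i, rfl⟩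
    exact ⟨i, Quotient.sound ⟨rfl, (M.isEquiv i).symm (h i)⟩⟩

lemma gFacet_isFacet {n : ℕ} {S : Type} (M : KFrame (Fin (n+1)) S) (s : S) :
    (cscOf M).IsFacet (gFacet M s) := by
  refine ⟨gFacet_mem_simplexes M s, ?_⟩
  rintro Y ⟨-, t, ht⟩ hsub
  have h1 : gFacet M s ⊆ gFacet M t := hsub.trans ht
  have h2 : gFacet M t ⊆ gFacet M s :=
    (gFacet_subset_iff M).2 fun i => (M.isEquiv i).symm ((gFacet_subset_iff M).1 h1 i)
  exact Set.Subset.antisymm hsub (ht.trans h2)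

lemma isFacet_cscOf_iff {n : ℕ} {S : Type} (M : KFrame (Fin (n+1)) S) (X : Set (GVert M)) :
    (cscOf M).IsFacet X ↔ ∃ s, X = gFacet M s := by
  constructor
  · rintro ⟨⟨hne, s, hs⟩, hmax⟩
    exact ⟨s, hmax _ (gFacet_mem_simplexes M s) hs⟩
  · rintro ⟨s, rfl⟩
    exact gFacet_isFacet M s

lemma ncard_gFacet {n : ℕ} {S : Type} (M : KFrame (Fin (n+1)) S) (s : S) :
    (gFacet M s).ncard = n + 1 := by
  have hinj : Function.Injective fun i : Fin (n+1) => Quotient.mk (gSetoid M) (s, i) := by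
    intro i j hij
    exact (Quotient.exact hij).1
  have h := Set.ncard_image_of_injective (Set.univ : Set (Fin (n+1))) hinj
  rw [Set.image_univ, Set.ncard_univ] at h
  exact h.trans (by simp)

/-- The complex associated with a Kripke frame over `n+1` agents is pure of dimension `n`. -/
lemma cscOf_pure {n : ℕ} {S : Type} (M : KFrame (Fin (n+1)) S) : (cscOf M).Pure n := by
  intro X hX
  obtain ⟨s, rfl⟩ := (isFacet_cscOf_iff M X).1 hX
  exact ncard_gFacet M s

/-! ### Isomorphisms of chromatic simplicial complexes -/

/-- Image of a set of vertices under a map defined on vertices. -/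
def vimage {V W : Type} {P : V → Prop} {Q : W → Prop}
    (f : Subtype P → Subtype Q) (X : Set V) : Set W :=
  {w | ∃ v : Subtype P, v.1 ∈ X ∧ (f v).1 = w}

/-- Isomorphism of chromatic simplicial complexes: a color-preserving bijection between
the vertices which is a simplicial map in both directions. -/
def CSC.Iso {A V W : Type} (C : CSC A V) (D : CSC A W) : Prop :=
  ∃ e : C.Vertices ≃ D.Vertices,
    (∀ X ∈ C.simplexes, vimage (⇑e) X ∈ D.simplexes) ∧
    (∀ Y ∈ D.simplexes, vimage (⇑e.symm) Y ∈ C.simplexes) ∧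
    (∀ v : C.Vertices, D.color (e v).1 = C.color v.1)


/-! In a pure complex over `n+1` colours every facet has exactly one vertex of each colour, so
the formal vertex `(X, i)` of `G(F(C))` can be sent to the `i`-coloured vertex of the facet `X`.
Two formal vertices `(X, i)` and `(Y, i)` are identified exactly when `X` and `Y` share their
`i`-coloured vertex, which makes this map well defined and injective; it is onto because every
vertex lies in a facet. On both sides the simplexes are the nonempty subsets of facets, and the
facet glued in for the state `X` is sent onto `X`. -/

lemma vimage_subset {V W : Type} {P : V → Prop} {Q : W → Prop} {f : Subtype P → Subtype Q}
    {X : Set V} {Y : Set W} (h : ∀ v : Subtype P, v.1 ∈ X → (f v).1 ∈ Y) :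
    vimage f X ⊆ Y := by
  rintro _ ⟨v, hv, rfl⟩
  exact h v hv

lemma vimage_nonempty {V W : Type} {P : V → Prop} {Q : W → Prop} (f : Subtype P → Subtype Q)
    {X : Set V} (hX : X.Nonempty) (hP : ∀ v ∈ X, P v) : (vimage f X).Nonempty :=
  let ⟨v, hv⟩ := hX
  ⟨_, ⟨v, hP v hv⟩, hv, rfl⟩

lemma CSC.isVertex_of_mem {A V : Type} (C : CSC A V) {X : Set V} (hX : X ∈ C.simplexes)
    {v : V} (hv : v ∈ X) : C.IsVertex v :=
  C.down_closed X hX {v} (Set.singleton_subset_iff.2 hv) (Set.singleton_nonempty v)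

lemma cscOf_isVertex {n : ℕ} {S : Type} (M : KFrame (Fin (n+1)) S) (x : GVert M) :
    (cscOf M).IsVertex x := by
  induction x using Quotient.ind with
  | _ p => exact (cscOf M).isVertex_of_mem (gFacet_mem_simplexes M p.1) ⟨p.2, rfl⟩

namespace CSC

variable {n : ℕ} {V : Type} (C : CSC (Fin (n+1)) V) (hp : C.Pure n)

noncomputable def facetVertex (X : C.Facets) (i : Fin (n+1)) : V :=
  (C.facet_exists_color hp X.2 i).choose

lemma facetVertex_mem (X : C.Facets) (i : Fin (n+1)) : C.facetVertex hp X i ∈ X.1 :=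
  (C.facet_exists_color hp X.2 i).choose_spec.1

lemma color_facetVertex (X : C.Facets) (i : Fin (n+1)) : C.color (C.facetVertex hp X i) = i :=
  (C.facet_exists_color hp X.2 i).choose_spec.2

lemma eq_facetVertex {X : C.Facets} {v : V} (hv : v ∈ X.1) :
    v = C.facetVertex hp X (C.color v) :=
  C.chromatic X.1 X.2.1 hv (C.facetVertex_mem hp X _) (C.color_facetVertex hp X _).symm

noncomputable def ofGVert : GVert (kframeOf C hp) → V :=
  Quotient.lift (fun p => C.facetVertex hp p.1 p.2) <| by
    rintro ⟨X, i⟩ ⟨Y, _⟩ ⟨rfl, v, ⟨hvX, hvY⟩, rfl⟩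
    exact (C.eq_facetVertex hp hvX).symm.trans (C.eq_facetVertex hp hvY)

lemma ofGVert_mk (X : C.Facets) (i : Fin (n+1)) :
    C.ofGVert hp (Quotient.mk _ (X, i)) = C.facetVertex hp X i := rfl

lemma ofGVert_mem {X : C.Facets} {x : GVert (kframeOf C hp)}
    (hx : x ∈ gFacet (kframeOf C hp) X) : C.ofGVert hp x ∈ X.1 := by
  obtain ⟨i, rfl⟩ := hx
  exact C.facetVertex_mem hp X i

lemma isVertex_ofGVert (x : GVert (kframeOf C hp)) : C.IsVertex (C.ofGVert hp x) := by
  induction x using Quotient.ind with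
  | _ p => exact C.isVertex_of_mem p.1.2.1 (C.facetVertex_mem hp p.1 p.2)

lemma color_ofGVert (x : GVert (kframeOf C hp)) :
    C.color (C.ofGVert hp x) = (cscOf (kframeOf C hp)).color x := by
  induction x using Quotient.ind with
  | _ p => exact C.color_facetVertex hp p.1 p.2

noncomputable def toGVert (v : C.Vertices) : GVert (kframeOf C hp) :=
  let hX := C.mem_facet v.2
  Quotient.mk _ (⟨hX.choose, hX.choose_spec.1⟩, C.color v.1)

lemma toGVert_eq_mk (v : C.Vertices) {X : C.Facets} (hv : v.1 ∈ X.1) :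
    C.toGVert hp v = Quotient.mk _ (X, C.color v.1) :=
  Quotient.sound ⟨rfl, v.1, ⟨(C.mem_facet v.2).choose_spec.2 rfl, hv⟩, rfl⟩

lemma toGVert_mem {v : C.Vertices} {X : C.Facets} (hv : v.1 ∈ X.1) :
    C.toGVert hp v ∈ gFacet (kframeOf C hp) X :=
  ⟨C.color v.1, (C.toGVert_eq_mk hp v hv).symm⟩

lemma ofGVert_toGVert (v : C.Vertices) : C.ofGVert hp (C.toGVert hp v) = v.1 := by
  let X : C.Facets := ⟨_, (C.mem_facet v.2).choose_spec.1⟩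
  have hv : v.1 ∈ X.1 := (C.mem_facet v.2).choose_spec.2 rfl
  rw [C.toGVert_eq_mk hp v hv, ofGVert_mk, ← C.eq_facetVertex hp hv]

lemma toGVert_ofGVert (x : GVert (kframeOf C hp)) :
    C.toGVert hp ⟨C.ofGVert hp x, C.isVertex_ofGVert hp x⟩ = x := by
  induction x using Quotient.ind with
  | _ p =>
    rw [C.toGVert_eq_mk hp _ (C.facetVertex_mem hp p.1 p.2)]
    exact congrArg (fun i => Quotient.mk _ (p.1, i)) (C.color_facetVertex hp p.1 p.2)

noncomputable def gVertEquiv : (cscOf (kframeOf C hp)).Vertices ≃ C.Vertices where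
  toFun x := ⟨C.ofGVert hp x.1, C.isVertex_ofGVert hp x.1⟩
  invFun v := ⟨C.toGVert hp v, cscOf_isVertex _ _⟩
  left_inv x := Subtype.ext (C.toGVert_ofGVert hp x.1)
  right_inv v := Subtype.ext (C.ofGVert_toGVert hp v)

end CSC

/-- For every pure chromatic simplicial complex `C` of dimension `n` over
the agents `A = Fin (n+1)`, the complex `G(F(C))` is isomorphic to `C` as a pure chromatic
simplicial complex. -/
theorem statement2 {n : ℕ} {V : Type} (C : CSC (Fin (n+1)) V) (hp : C.Pure n) :
    (cscOf (kframeOf C hp)).Iso C := by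
  refine ⟨C.gVertEquiv hp, ?_, ?_, fun x => C.color_ofGVert hp x.1⟩
  · rintro X ⟨hne, s, hXs⟩
    refine C.down_closed s.1 s.2.1 _ ?_ ?_
    · exact vimage_subset fun x hx => C.ofGVert_mem hp (hXs hx)
    · exact vimage_nonempty _ hne fun x _ => cscOf_isVertex _ x
  · intro Y hY
    obtain ⟨Z, hZ, hYZ⟩ := C.mem_facet hY
    refine ⟨vimage_nonempty _ (C.nonempty_mem Y hY) fun v => C.isVertex_of_mem hY, ⟨Z, hZ⟩, ?_⟩
    exact vimage_subset fun v hv => C.toGVert_mem hp (hYZ hv)
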